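/- The externally regulated binary gene is super-Poissonian: for all real a, b with 0 < a < b and all real ν > 0, in the case θ = 1 the variance of the steady-state protein distribution strictly exceeds its mean, i.e. ∑_{n} n²·P_n − (∑_{n} n·P_n)² > ∑_{n} n·P_n, where P_n = P_{0,n} + P_{1,n}. -/

import Mathlib

open scoped BigOperators

/-- Pochhammer symbol `(a)ₙ = a(a+1)⋯(a+n−1)`, `(a)₀ = 1`. -/
noncomputable def poch (a : ℝ) (n : ℕ) : ℝ := ∏ k ∈ Finset.range n, (a + k)

/-- Kummer's confluent hypergeometric function `M(a,b,z)`. -/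
noncomputable def kummerM (a b z : ℝ) : ℝ :=
  ∑' k : ℕ, poch a k / poch b k * z ^ k / (Nat.factorial k : ℝ)

/-- Steady-state probability `P_{0,n}` of the binary gene model. -/
noncomputable def P0 (a b ν θ : ℝ) (n : ℕ) : ℝ :=
  (b - a) / (kummerM a b (ν * (1 - θ)) * b) * (ν ^ n / (Nat.factorial n : ℝ)) *
    (poch a n / poch (1 + b) n) * kummerM (a + n) (1 + b + n) (-(ν * θ))

/-- Steady-state probability `P_{1,n}` of the binary gene model. -/
noncomputable def P1 (a b ν θ : ℝ) (n : ℕ) : ℝ :=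
  a / (kummerM a b (ν * (1 - θ)) * b) * (ν ^ n / (Nat.factorial n : ℝ)) *
    (poch (1 + a) n / poch (1 + b) n) * kummerM (1 + a + n) (1 + b + n) (-(ν * θ))

/-! ### Auxiliary lemmas -/

lemma poch_pos {x : ℝ} (hx : 0 < x) (n : ℕ) : 0 < poch x n := by
  apply Finset.prod_pos; intro k _; positivity

lemma poch_add (x : ℝ) (n k : ℕ) : poch x (n + k) = poch x n * poch (x + n) k := by
  unfold poch
  rw [Finset.prod_range_add]
  congr 1
  apply Finset.prod_congr rfl
  intro i _
  push_cast
  ring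

lemma poch_le {x y : ℝ} (hx : 0 < x) (hxy : x ≤ y) (n : ℕ) : poch x n ≤ poch y n := by
  apply Finset.prod_le_prod
  · intro k _; positivity
  · intro k _; linarith

lemma summable_kummer {x y : ℝ} (hx : 0 < x) (hxy : x ≤ y) (z : ℝ) :
    Summable (fun k : ℕ => poch x k / poch y k * z ^ k / (Nat.factorial k : ℝ)) := by
  apply Summable.of_abs
  apply Summable.of_nonneg_of_le (fun k => abs_nonneg _) _
    (Real.summable_pow_div_factorial |z|)
  intro k
  have h1 : 0 < poch x k := poch_pos hx k
  have h2 : 0 < poch y k := poch_pos (lt_of_lt_of_le hx hxy) k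
  have hf : (0:ℝ) < (Nat.factorial k : ℝ) := by positivity
  rw [abs_div, abs_mul, abs_div, abs_pow, abs_of_pos h1, abs_of_pos h2,
    abs_of_pos hf]
  have hr : poch x k / poch y k ≤ 1 := div_le_one_of_le₀ (poch_le hx hxy k) h2.le
  have : poch x k / poch y k * |z| ^ k ≤ 1 * |z| ^ k := by
    apply mul_le_mul_of_nonneg_right hr (by positivity)
  calc poch x k / poch y k * |z| ^ k / (Nat.factorial k : ℝ)
      ≤ 1 * |z| ^ k / (Nat.factorial k : ℝ) := by gcongr
    _ = |z| ^ k / (Nat.factorial k : ℝ) := by ring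

lemma kummerM_zero (x y : ℝ) : kummerM x y 0 = 1 := by
  unfold kummerM
  rw [tsum_eq_single 0]
  · simp [poch]
  · intro k hk
    simp [zero_pow hk]

/-- The combined coefficient of the protein distribution. -/
noncomputable def Qf (a b : ℝ) (m : ℕ) : ℝ :=
  ((b - a) * poch a m + a * poch (1 + a) m) / (b * poch (1 + b) m)

lemma Qf_nonneg {a b : ℝ} (ha : 0 < a) (hab : a < b) (m : ℕ) : 0 ≤ Qf a b m := by
  have hb : 0 < b := ha.trans hab
  have h1 := poch_pos ha m
  have h2 := poch_pos (show (0:ℝ) < 1 + a by linarith) m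
  have h3 := poch_pos (show (0:ℝ) < 1 + b by linarith) m
  apply div_nonneg _ (by positivity)
  nlinarith

lemma Qf_le_one {a b : ℝ} (ha : 0 < a) (hab : a < b) (m : ℕ) : Qf a b m ≤ 1 := by
  have hb : 0 < b := ha.trans hab
  have h3 := poch_pos (show (0:ℝ) < 1 + b by linarith) m
  have h1 : poch a m ≤ poch (1 + b) m := poch_le ha (by linarith) m
  have h2 : poch (1 + a) m ≤ poch (1 + b) m :=
    poch_le (show (0:ℝ) < 1 + a by linarith) (by linarith) m
  rw [Qf, div_le_one (by positivity)]
  nlinarith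

lemma row {a b ν : ℝ} (ha : 0 < a) (hab : a < b) (hν : 0 < ν) (n : ℕ) :
    P0 a b ν 1 n + P1 a b ν 1 n =
      ∑' k : ℕ, Qf a b (n + k) * ν ^ n * (-ν) ^ k /
        ((Nat.factorial n : ℝ) * (Nat.factorial k : ℝ)) := by
  have hb : 0 < b := ha.trans hab
  have h1a : (0:ℝ) < 1 + a := by linarith
  have h1b : (0:ℝ) < 1 + b := by linarith
  have e0 : ν * (1 - 1) = 0 := by ring
  have e1 : -(ν * 1) = -ν := by ring
  rw [P0, P1, e0, e1, kummerM_zero, one_mul]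
  rw [kummerM, kummerM]
  rw [← tsum_mul_left, ← tsum_mul_left]
  rw [← Summable.tsum_add
    ((summable_kummer (by positivity : (0:ℝ) < a + n) (by linarith) (-ν)).mul_left _)
    ((summable_kummer (by positivity : (0:ℝ) < 1 + a + n) (by linarith) (-ν)).mul_left _)]
  apply tsum_congr
  intro k
  have hp1 : poch (1 + b) n ≠ 0 := (poch_pos h1b n).ne'
  have hp2 : poch (1 + b + n) k ≠ 0 := (poch_pos (by positivity) k).ne'
  have hfn : (Nat.factorial n : ℝ) ≠ 0 := by positivity
  have hfk : (Nat.factorial k : ℝ) ≠ 0 := by positivity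
  rw [Qf, poch_add a n k, poch_add (1+a) n k, poch_add (1+b) n k]
  field_simp

lemma nat_succ_sq_le (n : ℕ) : ((n : ℝ) + 1) ^ 2 ≤ 4 ^ n := by
  have h : (n : ℝ) + 1 ≤ 2 ^ n := by
    have h0 : n + 1 ≤ 2 ^ n := Nat.lt_two_pow_self
    exact_mod_cast h0
  calc ((n : ℝ) + 1) ^ 2 ≤ (2 ^ n) ^ 2 := by
        apply pow_le_pow_left₀ (by positivity) h
    _ = 4 ^ n := by rw [← pow_mul, mul_comm, pow_mul]; norm_num

lemma summable_F {a b ν : ℝ} (ha : 0 < a) (hab : a < b) (hν : 0 < ν)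
    (w : ℕ → ℝ) (hw : ∀ n, |w n| ≤ ((n : ℝ) + 1) ^ 2) :
    Summable (fun p : ℕ × ℕ => w p.1 * (Qf a b (p.1 + p.2) * ν ^ p.1 * (-ν) ^ p.2 /
      ((Nat.factorial p.1 : ℝ) * (Nat.factorial p.2 : ℝ)))) := by
  apply Summable.of_abs
  have hbase : Summable (fun p : ℕ × ℕ =>
      (4 * ν) ^ p.1 / (Nat.factorial p.1 : ℝ) * ((4 * ν) ^ p.2 / (Nat.factorial p.2 : ℝ))) := by
    apply Summable.mul_of_nonneg (Real.summable_pow_div_factorial (4 * ν))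
      (Real.summable_pow_div_factorial (4 * ν)) <;> intro i <;> positivity
  apply Summable.of_nonneg_of_le (fun p => abs_nonneg _) _ hbase
  rintro ⟨n, k⟩
  have hfn : (0:ℝ) < (Nat.factorial n : ℝ) := by positivity
  have hfk : (0:ℝ) < (Nat.factorial k : ℝ) := by positivity
  have hQ0 := Qf_nonneg ha hab (n + k)
  have hQ1 := Qf_le_one ha hab (n + k)
  have key : |w n| * Qf a b (n + k) ≤ 4 ^ n * 4 ^ k := by
    calc |w n| * Qf a b (n + k) ≤ ((n : ℝ) + 1) ^ 2 * 1 :=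
          mul_le_mul (hw n) hQ1 hQ0 (by positivity)
      _ = ((n : ℝ) + 1) ^ 2 := by ring
      _ ≤ 4 ^ n := nat_succ_sq_le n
      _ ≤ 4 ^ n * 4 ^ k := le_mul_of_one_le_right (by positivity) (one_le_pow₀ (by norm_num))
  have habs : |w n * (Qf a b (n + k) * ν ^ n * (-ν) ^ k /
      ((Nat.factorial n : ℝ) * (Nat.factorial k : ℝ)))|
      = |w n| * Qf a b (n + k) * ν ^ n * ν ^ k /
        ((Nat.factorial n : ℝ) * (Nat.factorial k : ℝ)) := by
    rw [abs_mul, abs_div, abs_mul, abs_mul, abs_pow, abs_pow, abs_neg,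
      abs_of_pos hν, abs_of_nonneg hQ0,
      abs_of_pos (by positivity : (0:ℝ) < (Nat.factorial n : ℝ) * (Nat.factorial k : ℝ))]
    ring
  rw [habs]
  calc |w n| * Qf a b (n + k) * ν ^ n * ν ^ k / ((Nat.factorial n : ℝ) * (Nat.factorial k : ℝ))
      ≤ 4 ^ n * 4 ^ k * ν ^ n * ν ^ k / ((Nat.factorial n : ℝ) * (Nat.factorial k : ℝ)) := by
        gcongr ?_ * _ * _ / _
    _ = (4 * ν) ^ n / (Nat.factorial n : ℝ) * ((4 * ν) ^ k / (Nat.factorial k : ℝ)) := by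
        rw [mul_pow, mul_pow]; field_simp

lemma moment {a b ν : ℝ} (ha : 0 < a) (hab : a < b) (hν : 0 < ν)
    (w : ℕ → ℝ) (hw : ∀ n, |w n| ≤ ((n : ℝ) + 1) ^ 2) :
    ∑' n : ℕ, w n * (P0 a b ν 1 n + P1 a b ν 1 n) =
      ∑' m : ℕ, Qf a b m * ∑ p ∈ Finset.HasAntidiagonal.antidiagonal m,
        w p.1 * ν ^ p.1 * (-ν) ^ p.2 / ((Nat.factorial p.1 : ℝ) * (Nat.factorial p.2 : ℝ)) := by
  set F : ℕ × ℕ → ℝ := fun p => w p.1 * (Qf a b (p.1 + p.2) * ν ^ p.1 * (-ν) ^ p.2 /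
      ((Nat.factorial p.1 : ℝ) * (Nat.factorial p.2 : ℝ))) with hF
  have hFs : Summable F := summable_F ha hab hν w hw
  have step1 : ∑' n : ℕ, w n * (P0 a b ν 1 n + P1 a b ν 1 n) = ∑' (n : ℕ) (k : ℕ), F (n, k) := by
    apply tsum_congr
    intro n
    rw [row ha hab hν n, ← tsum_mul_left]
  have step2 : ∑' (n : ℕ) (k : ℕ), F (n, k) = ∑' p : ℕ × ℕ, F p :=
    (Summable.tsum_prod' hFs hFs.prod_factor).symm
  have step3 : ∑' p : ℕ × ℕ, F p =
      ∑' σ : (Σ m : ℕ, Finset.HasAntidiagonal.antidiagonal m), F σ.2 :=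
    (Finset.HasAntidiagonal.sigmaAntidiagonalEquivProd.tsum_eq F).symm
  have hFs' : Summable (fun σ : (Σ m : ℕ, Finset.HasAntidiagonal.antidiagonal m) => F σ.2) :=
    Finset.HasAntidiagonal.sigmaAntidiagonalEquivProd.summable_iff.mpr hFs
  have step4 : ∑' σ : (Σ m : ℕ, Finset.HasAntidiagonal.antidiagonal m), F σ.2 =
      ∑' (m : ℕ), ∑' (p : Finset.HasAntidiagonal.antidiagonal m), F p :=
    hFs'.tsum_sigma' (fun m => Summable.of_finite)
  rw [step1, step2, step3, step4]
  apply tsum_congr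
  intro m
  rw [Finset.tsum_subtype (Finset.HasAntidiagonal.antidiagonal m) F, Finset.mul_sum]
  apply Finset.sum_congr rfl
  rintro ⟨n, k⟩ hp
  rw [Finset.HasAntidiagonal.mem_antidiagonal] at hp
  simp only [hF]
  rw [show n + k = m from hp]
  ring

/-- The diagonal sums appearing in the moments. -/
noncomputable def Tm (ν : ℝ) (w : ℕ → ℝ) (m : ℕ) : ℝ :=
  ∑ p ∈ Finset.HasAntidiagonal.antidiagonal m,
    w p.1 * ν ^ p.1 * (-ν) ^ p.2 / ((Nat.factorial p.1 : ℝ) * (Nat.factorial p.2 : ℝ))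

lemma Tm_one (ν : ℝ) (m : ℕ) : Tm ν (fun _ => 1) m = 0 ^ m / (Nat.factorial m : ℝ) := by
  have hm : (0:ℝ) < (Nat.factorial m : ℝ) := by positivity
  rw [Tm, Finset.Nat.sum_antidiagonal_eq_sum_range_succ_mk, eq_div_iff hm.ne']
  rw [Finset.sum_mul]
  have : ∀ k ∈ Finset.range (m + 1),
      (1:ℝ) * ν ^ k * (-ν) ^ (m - k) / ((Nat.factorial k : ℝ) * (Nat.factorial (m - k) : ℝ)) *
        (Nat.factorial m : ℝ)
      = ν ^ k * (-ν) ^ (m - k) * (m.choose k : ℝ) := by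
    intro k hk
    have hk' : k ≤ m := Nat.lt_succ_iff.mp (Finset.mem_range.mp hk)
    have hfact : (m.choose k : ℝ) * (Nat.factorial k : ℝ) * (Nat.factorial (m - k) : ℝ)
        = (Nat.factorial m : ℝ) := by
      exact_mod_cast congrArg (Nat.cast (R := ℝ)) (Nat.choose_mul_factorial_mul_factorial hk')
    have h1 : (0:ℝ) < (Nat.factorial k : ℝ) := by positivity
    have h2 : (0:ℝ) < (Nat.factorial (m - k) : ℝ) := by positivity
    rw [← hfact]
    field_simp
  rw [Finset.sum_congr rfl this, ← add_pow]
  norm_num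

lemma Tm_shift (ν : ℝ) (w : ℕ → ℝ) (hw0 : w 0 = 0) (m : ℕ) :
    Tm ν w (m + 1) = ν * Tm ν (fun j => w (j + 1) / ((j : ℝ) + 1)) m := by
  rw [Tm, Finset.Nat.antidiagonal_succ, Finset.sum_cons, Finset.sum_map, Tm, Finset.mul_sum]
  rw [hw0]
  simp only [zero_mul, zero_div, zero_add]
  apply Finset.sum_congr rfl
  rintro ⟨j, k⟩ _
  simp only [Function.Embedding.prodMap, Function.Embedding.coeFn_mk, Prod.map_apply,
    Function.Embedding.refl_apply]
  have h1 : (0:ℝ) < (Nat.factorial j : ℝ) := by positivity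
  have h2 : (0:ℝ) < (Nat.factorial k : ℝ) := by positivity
  have h3 : ((j : ℝ) + 1) ≠ 0 := by positivity
  rw [Nat.factorial_succ]
  push_cast
  field_simp
  simp only [Nat.succ_eq_add_one]
  ring

lemma Tm_congr (ν : ℝ) {w w' : ℕ → ℝ} (h : ∀ n, w n = w' n) (m : ℕ) :
    Tm ν w m = Tm ν w' m := by
  unfold Tm; apply Finset.sum_congr rfl; intro p _; rw [h]

lemma Tm_zero_of (ν : ℝ) {w : ℕ → ℝ} (hw0 : w 0 = 0) : Tm ν w 0 = 0 := by
  rw [Tm, Finset.Nat.antidiagonal_zero, Finset.sum_singleton, hw0]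
  simp

lemma Tm_addone (ν : ℝ) (m : ℕ) :
    Tm ν (fun j => (j : ℝ) + 1) m = Tm ν (fun j => (j : ℝ)) m + Tm ν (fun _ => 1) m := by
  unfold Tm
  rw [← Finset.sum_add_distrib]
  apply Finset.sum_congr rfl; intro p _; ring

lemma Tid_succ (ν : ℝ) (m : ℕ) :
    Tm ν (fun j => (j : ℝ)) (m + 1) = ν * (0 ^ m / (Nat.factorial m : ℝ)) := by
  rw [Tm_shift ν _ (by norm_num) m, Tm_congr ν (w' := fun _ => 1) _ m, Tm_one]
  intro j
  have : ((j : ℝ) + 1) ≠ 0 := by positivity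
  push_cast
  field_simp

lemma Tsq_succ (ν : ℝ) (m : ℕ) :
    Tm ν (fun j => (j : ℝ) ^ 2) (m + 1) =
      ν * (Tm ν (fun j => (j : ℝ)) m + 0 ^ m / (Nat.factorial m : ℝ)) := by
  rw [Tm_shift ν _ (by norm_num) m, Tm_congr ν (w' := fun j => (j : ℝ) + 1) _ m,
    Tm_addone, Tm_one]
  intro j
  have h : ((j : ℝ) + 1) ≠ 0 := by positivity
  push_cast
  field_simp

lemma Tid_val (ν : ℝ) : ∀ m : ℕ, Tm ν (fun j => (j : ℝ)) m = if m = 1 then ν else 0 := by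
  rintro (_ | _ | m)
  · simp [Tm_zero_of ν (w := fun j => ((j : ℕ) : ℝ)) (by norm_num)]
  · simp [Tid_succ]
  · rw [Tid_succ]
    simp [Nat.succ_ne_zero]

lemma Tsq_val (ν : ℝ) : ∀ m : ℕ,
    Tm ν (fun j => (j : ℝ) ^ 2) m = if m = 1 then ν else if m = 2 then ν ^ 2 else 0 := by
  rintro (_ | _ | _ | m)
  · simp [Tm_zero_of ν (w := fun j => ((j : ℕ) : ℝ) ^ 2) (by norm_num)]
  · simp [Tsq_succ, Tm_zero_of ν (w := fun j => ((j : ℕ) : ℝ)) (by norm_num)]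
  · rw [Tsq_succ]
    simp [Tid_succ]
    ring
  · rw [Tsq_succ]
    simp [Tid_succ, Nat.succ_ne_zero]

lemma Qf_one {a b : ℝ} (ha : 0 < a) (hab : a < b) : Qf a b 1 = a / b := by
  have hb : 0 < b := ha.trans hab
  have h1b : (0:ℝ) < 1 + b := by linarith
  rw [Qf]
  simp only [poch, Finset.prod_range_one, Nat.cast_zero, add_zero]
  rw [div_eq_div_iff (by positivity) hb.ne']
  ring

lemma Qf_two {a b : ℝ} (ha : 0 < a) (hab : a < b) :
    Qf a b 2 = a * (1 + a) / (b * (1 + b)) := by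
  have hb : 0 < b := ha.trans hab
  have h1b : (0:ℝ) < 1 + b := by linarith
  have h2b : (0:ℝ) < 2 + b := by linarith
  rw [Qf]
  have e : ∀ x : ℝ, poch x 2 = x * (x + 1) := by
    intro x
    simp [poch, Finset.prod_range_succ, Finset.prod_range_one]
  rw [e, e, e]
  rw [div_eq_div_iff (by positivity) (by positivity)]
  ring

/-- The externally regulated binary gene is super-Poissonian. -/
theorem super_poissonian_external (a b ν : ℝ) (ha : 0 < a) (hab : a < b)
    (hν : 0 < ν) :
    (∑' n : ℕ, (n : ℝ) ^ 2 * (P0 a b ν 1 n + P1 a b ν 1 n)) -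
        (∑' n : ℕ, (n : ℝ) * (P0 a b ν 1 n + P1 a b ν 1 n)) ^ 2 >
      ∑' n : ℕ, (n : ℝ) * (P0 a b ν 1 n + P1 a b ν 1 n) := by
  have hb : 0 < b := ha.trans hab
  have hwid : ∀ n : ℕ, |((n : ℕ) : ℝ)| ≤ ((n : ℝ) + 1) ^ 2 := by
    intro n
    rw [abs_of_nonneg (Nat.cast_nonneg n)]
    nlinarith [show (0:ℝ) ≤ (n:ℝ) from Nat.cast_nonneg n]
  have hwsq : ∀ n : ℕ, |((n : ℕ) : ℝ) ^ 2| ≤ ((n : ℝ) + 1) ^ 2 := by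
    intro n
    rw [abs_of_nonneg (by positivity)]
    nlinarith [show (0:ℝ) ≤ (n:ℝ) from Nat.cast_nonneg n]
  have hmean : ∑' n : ℕ, (n : ℝ) * (P0 a b ν 1 n + P1 a b ν 1 n) = a / b * ν := by
    rw [moment ha hab hν (fun n => (n : ℝ)) hwid]
    have : ∀ m : ℕ, Qf a b m * Tm ν (fun j => (j : ℝ)) m
        = if m = 1 then a / b * ν else 0 := by
      intro m
      rw [Tid_val]
      by_cases h : m = 1
      · subst h; simp [Qf_one ha hab]
      · simp [h]
    calc ∑' m : ℕ, Qf a b m * Tm ν (fun j => (j : ℝ)) m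
        = ∑' m : ℕ, if m = 1 then a / b * ν else 0 := tsum_congr this
      _ = a / b * ν := by
          rw [tsum_eq_single 1]
          · simp
          · intro m hm; simp [hm]
  have hsq : ∑' n : ℕ, (n : ℝ) ^ 2 * (P0 a b ν 1 n + P1 a b ν 1 n)
      = a / b * ν + a * (1 + a) / (b * (1 + b)) * ν ^ 2 := by
    rw [moment ha hab hν (fun n => (n : ℝ) ^ 2) hwsq]
    have key : ∀ m : ℕ, Qf a b m * Tm ν (fun j => (j : ℝ) ^ 2) m
        = if m = 1 then a / b * ν else if m = 2 then a * (1 + a) / (b * (1 + b)) * ν ^ 2 else 0 := by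
      intro m
      rw [Tsq_val]
      by_cases h1 : m = 1
      · subst h1; simp [Qf_one ha hab]
      · by_cases h2 : m = 2
        · subst h2; simp [Qf_two ha hab]
        · simp [h1, h2]
    calc ∑' m : ℕ, Qf a b m * Tm ν (fun j => (j : ℝ) ^ 2) m
        = ∑' m : ℕ, if m = 1 then a / b * ν
            else if m = 2 then a * (1 + a) / (b * (1 + b)) * ν ^ 2 else 0 := tsum_congr key
      _ = a / b * ν + a * (1 + a) / (b * (1 + b)) * ν ^ 2 := by
          rw [tsum_eq_sum (s := {1, 2}) ?vanish]
          · norm_num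
          case vanish =>
            intro m hm
            simp only [Finset.mem_insert, Finset.mem_singleton] at hm
            push_neg at hm
            simp [hm.1, hm.2]
  rw [hmean, hsq]
  have key : (a / b) ^ 2 < a * (1 + a) / (b * (1 + b)) := by
    rw [div_pow, div_lt_div_iff₀ (by positivity) (by positivity)]
    nlinarith [mul_pos (mul_pos ha hb) (sub_pos.mpr hab)]
  have key2 : (a / b) ^ 2 * ν ^ 2 < a * (1 + a) / (b * (1 + b)) * ν ^ 2 :=
    mul_lt_mul_of_pos_right key (by positivity)
  have e : (a / b * ν) ^ 2 = (a / b) ^ 2 * ν ^ 2 := by ring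
  linarith [e ▸ key2]
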